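/- For fixed σ > 0 and α, β > 0, under the Kac-type scaling λ(c) = (c² + 2αc)/σ² and μ(c) = (c² + 2βc)/σ², the expected cycle length E(C̃_{0,0})(c) = E(C_{0,0}) evaluated with rates λ(c), μ(c) and boundary H/c tends to 0 as c → +∞. -/

import Mathlib

open Real Filter Topology

/-!
Under the Kac scaling the rates are `c * ((c + 2a) / σ²)` and `c * ((c + 2b) / σ²)` and the
boundary is `H / c`. The space scaling `EC00 (k l) (k m) (h / k) = EC00 l m h / k` with `k = c`
turns the cycle length into `EC00 l (l + δ) H / c` with `l = (c + 2a) / σ² → ∞` and the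
constant gap `δ = 2 (b - a) / σ²`. In the variable `t = 1 / l`, `EC00 l (l + δ) H` is a
quotient of polynomials whose denominator `-δ (1 - e^{Hδ})²` does not vanish at `t = 0`, so it
converges, and dividing by `c` gives `0`.
-/

/-- Expected cycle length `E(C_{0,0})` as a function of the rates and the boundary. -/
noncomputable def EC00 (l m h : ℝ) : ℝ :=
  2 * l * (l - m * Real.exp (2 * h * (m - l)) +
      (m - l) * Real.exp (h * (m - l)) * (1 + h * (l + m))) /
    ((l - m) * (l - m * Real.exp (h * (m - l))) ^ 2)

theorem EC00_self (l h : ℝ) : EC00 l l h = 0 := by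
  simp [EC00]

theorem EC00_mul_mul_div (k l m h : ℝ) (hk : k ≠ 0) :
    EC00 (k * l) (k * m) (h / k) = EC00 l m h / k := by
  have hκ : h / k * (k * m - k * l) = h * (m - l) := by field_simp
  have h2κ : 2 * (h / k) * (k * m - k * l) = 2 * h * (m - l) := by field_simp
  unfold EC00
  rw [hκ, h2κ, div_div]
  conv_rhs => rw [← mul_div_mul_left _ _ (pow_ne_zero 2 hk)]
  congr 1 <;> field_simp

theorem tendsto_EC00_add_const (δ h : ℝ) (hhδ : h * δ ≠ 0) :
    Tendsto (fun l => EC00 l (l + δ) h) atTop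
      (𝓝 (2 * (1 - exp (2 * h * δ) + 2 * h * δ * exp (h * δ)) /
        (-δ * (1 - exp (h * δ)) ^ 2))) := by
  set N : ℝ → ℝ := fun t =>
    2 * (1 - (1 + δ * t) * exp (2 * h * δ) + δ * exp (h * δ) * (t + h * (2 + δ * t)))
  set D : ℝ → ℝ := fun t => -δ * (1 - (1 + δ * t) * exp (h * δ)) ^ 2
  have hD : D 0 ≠ 0 := by
    have hE : exp (h * δ) ≠ 1 := by rwa [Ne, exp_eq_one_iff]
    simp only [D, mul_zero, add_zero, one_mul]
    exact mul_ne_zero (neg_ne_zero.2 (right_ne_zero_of_mul hhδ))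
      (pow_ne_zero 2 (sub_ne_zero.2 hE.symm))
  have hND : ContinuousAt (fun t => N t / D t) 0 := by
    apply ContinuousAt.div <;> first | fun_prop | exact hD
  have hlim := hND.tendsto.comp tendsto_inv_atTop_zero
  convert hlim.congr' ?_ using 2
  · simp only [N, D]
    ring
  · filter_upwards [eventually_ne_atTop 0] with l hl
    have hδ : l + δ - l = δ := add_sub_cancel_left l δ
    simp only [Function.comp_apply, EC00, hδ, N, D]
    rw [← mul_div_mul_left _ _ (pow_ne_zero 2 hl)]
    congr 1 <;> field_simp <;> ring

theorem stmt15_general (σ a b H : ℝ) (hσ : 0 < σ) (hH : 0 < H) :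
    Tendsto (fun c : ℝ =>
        EC00 ((c ^ 2 + 2 * a * c) / σ ^ 2) ((c ^ 2 + 2 * b * c) / σ ^ 2) (H / c))
      atTop (𝓝 0) := by
  -- for `a = b` the factor `λ - μ` of the denominator vanishes, so `EC00` is `0` by `x / 0 = 0`
  rcases eq_or_ne a b with rfl | hab
  · simp only [EC00_self]
    exact tendsto_const_nhds
  have hs : 0 < σ ^ 2 := by positivity
  have hHδ : H * (2 * (b - a) / σ ^ 2) ≠ 0 :=
    mul_ne_zero hH.ne' (div_ne_zero (mul_ne_zero two_ne_zero (sub_ne_zero.2 hab.symm)) hs.ne')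
  have hl : Tendsto (fun c => (c + 2 * a) / σ ^ 2) atTop atTop :=
    (tendsto_atTop_add_const_right _ _ tendsto_id).atTop_div_const hs
  have hg := (tendsto_EC00_add_const _ H hHδ).comp hl
  refine (hg.div_atTop tendsto_id).congr' ?_
  filter_upwards [eventually_ne_atTop 0] with c hc
  have hrate_a : (c ^ 2 + 2 * a * c) / σ ^ 2 = c * ((c + 2 * a) / σ ^ 2) := by ring
  have hrate_b :
      (c ^ 2 + 2 * b * c) / σ ^ 2 = c * ((c + 2 * a) / σ ^ 2 + 2 * (b - a) / σ ^ 2) := by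
    ring
  rw [hrate_a, hrate_b, EC00_mul_mul_div _ _ _ _ hc]
  rfl

theorem stmt15 (σ a b H : ℝ) (hσ : 0 < σ) (ha : 0 < a) (hb : 0 < b) (hH : 0 < H) :
    Tendsto (fun c : ℝ =>
        EC00 ((c ^ 2 + 2 * a * c) / σ ^ 2) ((c ^ 2 + 2 * b * c) / σ ^ 2) (H / c))
      atTop (𝓝 0) :=
  stmt15_general σ a b H hσ hH
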